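/- Extension lemma for prefix consistency: Let s ∈ Σ^k, k < n, be prefix consistent with L, and let c ∈ Σ. Then s·c is prefix consistent with L if and only if (i) b_c(s) = 0 (i.e., L_c[|s|_c] = min{L[j] : ℓ_c(s) < j ≤ k}) and (ii) the vector b(s·c) contains no entry equal to −1, where b(s·c) is computed via the update rules: b_c(s·c) = sign-comparison of L_c[|s|_c + 1] with L[k+1], and, for d ≠ c, b_d(s·c) = −1 if L_d[|s|_d] > L[k+1], 0 if L_d[|s|_d] = L[k+1], and b_d(s) otherwise. Moreover b(s·c) and the Parikh vector p(s·c) depend only on p(s), b(s), c and L. -/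

import Mathlib

set_option linter.unusedSectionVars false

namespace SILA

/-- The number of occurrences of `c` in `s` strictly before position `h`. -/
def countBelow {k σ : ℕ} (s : Fin k → Fin σ) (c : Fin σ) (h : Fin k) : ℕ :=
  (Finset.univ.filter (fun m : Fin k => m < h ∧ s m = c)).card

/-- The number of occurrences of `c` in `s`. -/
def countAll {k σ : ℕ} (s : Fin k → Fin σ) (c : Fin σ) : ℕ :=
  (Finset.univ.filter (fun m : Fin k => s m = c)).card

/-- `ℓ_c(s) + 1`: one plus the position of the last occurrence of `c` in `s`
(`0` if `c` does not occur in `s`). -/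
def lastOccSucc {k σ : ℕ} (s : Fin k → Fin σ) (c : Fin σ) : ℕ :=
  (Finset.univ.filter (fun m : Fin k => s m = c)).sup (fun m => m.val + 1)

/-- `min { L j : lo ≤ j ≤ hi }` (`⊤` if the range is empty). -/
def rangeMin (L : ℕ → WithTop ℤ) (lo hi : ℕ) : WithTop ℤ :=
  (Finset.Icc lo hi).inf L

/-- The pair constraint for character `c` whose c-interval starts at `ic`:
for consecutive occurrences of `c` at positions `h < h'` (the `i`-th and
`(i+1)`-th occurrences), `L[ic + i] = 1 + min{ L j : h < j ≤ h' }`. -/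
def PairConstraint (L : ℕ → WithTop ℤ) (ic : ℕ) {k σ : ℕ}
    (s : Fin k → Fin σ) (c : Fin σ) : Prop :=
  ∀ h h' : Fin k, h < h' → s h = c → s h' = c →
    (∀ m : Fin k, h < m → m < h' → s m ≠ c) →
    L (ic + countBelow s c h + 1) = 1 + rangeMin L (h.val + 1) h'.val

/-- The partial pair constraint for `c`:
`L[ic + |s|_c] ≤ 1 + min{ L j : ℓ_c(s) < j ≤ k }`. -/
def PartialPairConstraint (L : ℕ → WithTop ℤ) (ic : ℕ) {k σ : ℕ}
    (s : Fin k → Fin σ) (c : Fin σ) : Prop :=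
  L (ic + countAll s c) ≤ 1 + rangeMin L (lastOccSucc s c) k

/-- `s` is prefix consistent with `L` (with c-intervals starting at `ic c`, of
length `nL c`): all pair constraints hold, and for each `c` with `|s|_c < |L|_c`
the partial pair constraint holds. -/
def PrefixConsistent (L : ℕ → WithTop ℤ) {σ k : ℕ} (ic : Fin σ → ℕ)
    (nL : Fin σ → ℕ) (s : Fin k → Fin σ) : Prop :=
  (∀ c : Fin σ, PairConstraint L (ic c) s c) ∧
  ∀ c : Fin σ, countAll s c < nL c → PartialPairConstraint L (ic c) s c

/-- The vector entry `b_c(s) ∈ {-1, 0, 1}`: comparison of `L_c[|s|_c]` with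
`min{ L j : ℓ_c(s) < j ≤ k }`. -/
noncomputable def bval (L : ℕ → WithTop ℤ) (Lc : ℕ → WithTop ℤ) {k σ : ℕ}
    (s : Fin k → Fin σ) (c : Fin σ) : ℤ :=
  if rangeMin L (lastOccSucc s c) k < Lc (countAll s c) then -1
  else if Lc (countAll s c) = rangeMin L (lastOccSucc s c) k then 0
  else 1

/-! ### Auxiliary lemmas -/

section WT

lemma wt_coe_n1 : (-1 : WithTop ℤ) = ((-1:ℤ) : WithTop ℤ) := by norm_cast
lemma wt_coe_n2 : (-2 : WithTop ℤ) = ((-2:ℤ) : WithTop ℤ) := by norm_cast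
lemma wt_coe_0 : (0 : WithTop ℤ) = ((0:ℤ) : WithTop ℤ) := by norm_cast
lemma wt_coe_1 : (1 : WithTop ℤ) = ((1:ℤ) : WithTop ℤ) := by norm_cast

lemma wt_n2_lt_n1 : (-2 : WithTop ℤ) < -1 := by
  rw [wt_coe_n1, wt_coe_n2, WithTop.coe_lt_coe]; norm_num
lemma wt_n1_le_0 : (-1 : WithTop ℤ) ≤ 0 := by
  rw [wt_coe_n1, wt_coe_0, WithTop.coe_le_coe]; norm_num
lemma wt_n2_le_n1 : (-2 : WithTop ℤ) ≤ -1 := wt_n2_lt_n1.le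
lemma wt_0_lt_1 : (0 : WithTop ℤ) < 1 := by
  rw [wt_coe_0, wt_coe_1, WithTop.coe_lt_coe]; norm_num
lemma wt_1_add_n1 : (1 : WithTop ℤ) + (-1) = 0 := by
  rw [wt_coe_n1, wt_coe_1, ← WithTop.coe_add, wt_coe_0]; norm_num

lemma wt_top_sub : (⊤ : WithTop ℤ) - 1 = ⊤ := WithTop.LinearOrderedAddCommGroup.top_sub _
lemma wt_coe_sub (a : ℤ) : ((a : WithTop ℤ)) - 1 = ((a-1:ℤ) : WithTop ℤ) := by
  rw [wt_coe_1, ← WithTop.LinearOrderedAddCommGroup.coe_sub]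
lemma wt_coe_add (m : ℤ) : (1:WithTop ℤ) + (m:WithTop ℤ) = ((1+m:ℤ):WithTop ℤ) := by norm_cast

lemma wt_sub_le_iff (A M : WithTop ℤ) : A - 1 ≤ M ↔ A ≤ 1 + M := by
  induction A using WithTop.recTopCoe with
  | top =>
    rw [wt_top_sub]
    induction M using WithTop.recTopCoe with
    | top => simp
    | coe m => rw [wt_coe_add]; simp
  | coe a =>
    induction M using WithTop.recTopCoe with
    | top => simp
    | coe m =>
      rw [wt_coe_sub, wt_coe_add, WithTop.coe_le_coe, WithTop.coe_le_coe]; omega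

lemma wt_sub_eq_iff (A M : WithTop ℤ) : A - 1 = M ↔ A = 1 + M := by
  induction A using WithTop.recTopCoe with
  | top =>
    rw [wt_top_sub]
    induction M using WithTop.recTopCoe with
    | top => simp
    | coe m => rw [wt_coe_add]; exact ⟨fun h => absurd h (by simp), fun h => absurd h.symm (by simp)⟩
  | coe a =>
    induction M using WithTop.recTopCoe with
    | top => rw [wt_coe_sub]; simp
    | coe m =>
      rw [wt_coe_sub, wt_coe_add, WithTop.coe_eq_coe, WithTop.coe_eq_coe]; omega

lemma wt_one_add_ge (M : WithTop ℤ) (h : 0 ≤ M) : 1 ≤ 1 + M := by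
  calc (1:WithTop ℤ) = 1 + 0 := by simp
  _ ≤ 1 + M := add_le_add_right h 1

end WT

section Counting

variable {k σ : ℕ} (s : Fin k → Fin σ) (c d : Fin σ)

lemma castSuccEmb_apply (m : Fin k) : (Fin.castSuccEmb : Fin k ↪ Fin (k+1)) m = Fin.castSucc m := rfl

lemma countAll_snoc_self : countAll (Fin.snoc s c : Fin (k+1) → Fin σ) c = countAll s c + 1 := by
  unfold countAll
  rw [Fin.univ_castSuccEmb, Finset.filter_cons]
  split_ifs with hif
  swap
  · exact absurd (by simp) hif
  rw [Finset.card_cons, Finset.filter_map, Finset.card_map]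
  congr 2
  ext m
  simp [castSuccEmb_apply]
  exact Finset.mem_filter.trans (by simp)

lemma countAll_snoc_ne (hdc : d ≠ c) :
    countAll (Fin.snoc s c : Fin (k+1) → Fin σ) d = countAll s d := by
  unfold countAll
  rw [Fin.univ_castSuccEmb, Finset.filter_cons]
  split_ifs with hif
  · exact absurd (by simpa using hif) (Ne.symm hdc)
  rw [Finset.filter_map, Finset.card_map]
  congr 2
  ext m
  simp [castSuccEmb_apply]

lemma countBelow_snoc (h0 : Fin k) :
    countBelow (Fin.snoc s c : Fin (k+1) → Fin σ) d (Fin.castSucc h0) = countBelow s d h0 := by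
  unfold countBelow
  rw [Fin.univ_castSuccEmb, Finset.filter_cons]
  split_ifs with hif
  · obtain ⟨h, -⟩ := hif
    rw [Fin.lt_iff_val_lt_val] at h
    simp only [Fin.val_last, Fin.coe_castSucc] at h
    omega
  rw [Finset.filter_map, Finset.card_map]
  congr 2
  ext m
  simp [castSuccEmb_apply, Fin.castSucc_lt_castSucc_iff]

lemma lastOccSucc_le : lastOccSucc s c ≤ k := by
  unfold lastOccSucc
  apply Finset.sup_le
  intro m _
  omega

lemma lastOccSucc_snoc_self :
    lastOccSucc (Fin.snoc s c : Fin (k+1) → Fin σ) c = k + 1 := by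
  unfold lastOccSucc
  rw [Fin.univ_castSuccEmb, Finset.filter_cons]
  split_ifs with hif
  swap
  · exact absurd (by simp) hif
  rw [Finset.sup_cons]
  have h2 : ((Finset.univ.map Fin.castSuccEmb).filter
      (fun m : Fin (k+1) => (Fin.snoc s c : Fin (k+1) → Fin σ) m = c)).sup
      (fun m : Fin (k+1) => m.val + 1) ≤ k + 1 := by
    apply Finset.sup_le; intro m _; omega
  simp only [Fin.val_last]
  omega

lemma lastOccSucc_snoc_ne (hdc : d ≠ c) :
    lastOccSucc (Fin.snoc s c : Fin (k+1) → Fin σ) d = lastOccSucc s d := by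
  unfold lastOccSucc
  rw [Fin.univ_castSuccEmb, Finset.filter_cons]
  split_ifs with hif
  · exact absurd (by simpa using hif) (Ne.symm hdc)
  rw [Finset.filter_map, Finset.sup_map]
  have hfil : Finset.univ.filter
      ((fun m : Fin (k+1) => (Fin.snoc s c : Fin (k+1) → Fin σ) m = d) ∘ Fin.castSuccEmb)
      = Finset.univ.filter (fun m : Fin k => s m = d) := by
    ext m
    simp only [Finset.mem_filter, Finset.mem_univ, true_and, Function.comp_apply]
    rw [show (Fin.castSuccEmb : Fin k ↪ Fin (k+1)) m = Fin.castSucc m from rfl, Fin.snoc_castSucc]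
  rw [hfil]
  rfl

lemma countAll_of_lastOcc (h0 : Fin k) (hc : s h0 = c) (hmax : ∀ m : Fin k, h0 < m → s m ≠ c) :
    countBelow s c h0 + 1 = countAll s c := by
  unfold countBelow countAll
  have : Finset.univ.filter (fun m : Fin k => s m = c) =
      insert h0 (Finset.univ.filter (fun m : Fin k => m < h0 ∧ s m = c)) := by
    ext m
    simp only [Finset.mem_filter, Finset.mem_univ, true_and, Finset.mem_insert]
    constructor
    · intro hm
      rcases lt_trichotomy m h0 with h | h | h
      · exact Or.inr ⟨h, hm⟩
      · exact Or.inl h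
      · exact absurd hm (hmax m h)
    · rintro (rfl | ⟨_, hm⟩) <;> [exact hc; exact hm]
  rw [this, Finset.card_insert_of_notMem (by simp)]

lemma lastOccSucc_of_lastOcc (h0 : Fin k) (hc : s h0 = c) (hmax : ∀ m : Fin k, h0 < m → s m ≠ c) :
    lastOccSucc s c = h0.val + 1 := by
  unfold lastOccSucc
  apply le_antisymm
  · apply Finset.sup_le
    intro m hm
    simp only [Finset.mem_filter, Finset.mem_univ, true_and] at hm
    by_contra h
    exact hmax m (by omega) hm
  · exact Finset.le_sup (f := fun m : Fin k => m.val + 1)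
      (Finset.mem_filter.mpr ⟨Finset.mem_univ _, hc⟩)

lemma exists_lastOcc (h : 0 < countAll s c) :
    ∃ h0 : Fin k, s h0 = c ∧ ∀ m : Fin k, h0 < m → s m ≠ c := by
  have hne : (Finset.univ.filter (fun m : Fin k => s m = c)).Nonempty := by
    rw [← Finset.card_pos]; exact h
  obtain ⟨h0, hmem, hmax⟩ := Finset.exists_max_image _ id hne
  simp only [Finset.mem_filter, Finset.mem_univ, true_and] at hmem
  refine ⟨h0, hmem, fun m hm hc => ?_⟩
  have := hmax m (by simp [hc])
  simp only [id] at this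
  exact absurd hm (not_lt.mpr this)

lemma lastOccSucc_eq_zero (h : countAll s c = 0) : lastOccSucc s c = 0 := by
  unfold lastOccSucc
  have : Finset.univ.filter (fun m : Fin k => s m = c) = ∅ := Finset.card_eq_zero.mp h
  rw [this]
  rfl

lemma sum_countAll : ∑ c : Fin σ, countAll s c = k := by
  unfold countAll
  rw [← Finset.card_eq_sum_card_fiberwise (f := s) (t := Finset.univ)
    (fun x _ => Finset.mem_univ _)]
  simp

end Counting

section RangeMin

lemma rangeMin_self (L : ℕ → WithTop ℤ) (a : ℕ) : rangeMin L a a = L a := by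
  simp [rangeMin]

lemma rangeMin_succ (L : ℕ → WithTop ℤ) (lo kk : ℕ) (h : lo ≤ kk + 1) :
    rangeMin L lo (kk+1) = rangeMin L lo kk ⊓ L (kk+1) := by
  unfold rangeMin
  rw [show Finset.Icc lo (kk+1) = insert (kk+1) (Finset.Icc lo kk) by
    ext j; simp only [Finset.mem_Icc, Finset.mem_insert]; omega]
  rw [Finset.inf_insert]
  exact inf_comm _ _

lemma le_rangeMin (L : ℕ → WithTop ℤ) (lo hi : ℕ) (x : WithTop ℤ)
    (h : ∀ j, lo ≤ j → j ≤ hi → x ≤ L j) : x ≤ rangeMin L lo hi :=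
  Finset.le_inf (fun j hj => by
    rw [Finset.mem_Icc] at hj; exact h j hj.1 hj.2)

lemma rangeMin_le (L : ℕ → WithTop ℤ) (lo hi j : ℕ) (h1 : lo ≤ j) (h2 : j ≤ hi) :
    rangeMin L lo hi ≤ L j :=
  Finset.inf_le (Finset.mem_Icc.mpr ⟨h1, h2⟩)

variable {n : ℕ} {L : ℕ → WithTop ℤ} (hL0 : L 0 = -1) (hLn : L n = -2)
  (hLnn : ∀ r : ℕ, 0 < r → r < n → 0 ≤ L r)

include hL0 hLnn in
lemma neg_one_le_L (j : ℕ) (hj : j < n) : -1 ≤ L j := by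
  rcases Nat.eq_zero_or_pos j with rfl | hpos
  · rw [hL0]
  · exact le_trans wt_n1_le_0 (hLnn j hpos hj)

include hL0 hLnn in
lemma neg_one_le_rangeMin (lo hi : ℕ) (hhi : hi < n) : -1 ≤ rangeMin L lo hi :=
  le_rangeMin _ _ _ _ (fun j _ hj => neg_one_le_L hL0 hLnn j (lt_of_le_of_lt hj hhi))

include hLnn in
lemma zero_le_rangeMin (lo hi : ℕ) (hlo : 0 < lo) (hhi : hi < n) : 0 ≤ rangeMin L lo hi :=
  le_rangeMin _ _ _ _ (fun j h1 hj => hLnn j (lt_of_lt_of_le hlo h1) (lt_of_le_of_lt hj hhi))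

include hL0 hLn hLnn in
lemma neg_two_le_rangeMin (lo hi : ℕ) (hhi : hi ≤ n) : -2 ≤ rangeMin L lo hi := by
  apply le_rangeMin
  intro j _ hj
  rcases eq_or_lt_of_le (le_trans hj hhi) with heq | hlt
  · rw [heq, hLn]
  · exact le_trans wt_n2_le_n1 (neg_one_le_L hL0 hLnn j hlt)

include hL0 hLnn in
lemma rangeMin_zero_eq (hi : ℕ) (hhi : hi < n) : rangeMin L 0 hi = -1 := by
  apply le_antisymm
  · rw [← hL0]; exact rangeMin_le _ _ _ 0 (le_refl _) (Nat.zero_le _)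
  · exact neg_one_le_rangeMin hL0 hLnn _ _ hhi

end RangeMin

section Bval

lemma bval_eq_zero_iff {k σ : ℕ} (L Lc' : ℕ → WithTop ℤ) (s : Fin k → Fin σ) (c : Fin σ) :
    bval L Lc' s c = 0 ↔ Lc' (countAll s c) = rangeMin L (lastOccSucc s c) k := by
  unfold bval
  split_ifs with h1 h2
  · exact iff_of_false (by norm_num) (fun h => absurd (h ▸ h1) (lt_irrefl _))
  · exact iff_of_true rfl h2
  · exact iff_of_false (by norm_num) h2

lemma bval_ne_neg_one_iff {k σ : ℕ} (L Lc' : ℕ → WithTop ℤ) (s : Fin k → Fin σ) (c : Fin σ) :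
    bval L Lc' s c ≠ -1 ↔ Lc' (countAll s c) ≤ rangeMin L (lastOccSucc s c) k := by
  unfold bval
  split_ifs with h1 h2
  · exact iff_of_false (by norm_num) (not_le.mpr h1)
  · exact iff_of_true (by norm_num) (le_of_eq h2)
  · exact iff_of_true (by norm_num) (le_of_not_gt h1)

end Bval

section Structural

variable {n σ : ℕ} {L : ℕ → WithTop ℤ} {ic : Fin σ → ℕ} {nL : Fin σ → ℕ}
  {Lc : Fin σ → ℕ → WithTop ℤ}
  (hσ : 0 < σ)
  (hL0 : L 0 = -1) (hLn : L n = -2)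
  (hLnn : ∀ r : ℕ, 0 < r → r < n → 0 ≤ L r)
  (hic0 : ic ⟨0, hσ⟩ = 0) (hmono : StrictMono ic)
  (hzeros : ∀ r : ℕ, 0 < r → r < n → (L r = 0 ↔ ∃ c : Fin σ, ic c = r))
  (hnL : ∀ c : Fin σ,
    nL c = (if h : c.val + 1 < σ then ic ⟨c.val + 1, h⟩ else n) - ic c)
  (hLc0 : ∀ c : Fin σ, Lc c 0 = -1)
  (hLcmid : ∀ (c : Fin σ) (m : ℕ), 0 < m → m < nL c → Lc c m = L (ic c + m) - 1)
  (hLcend : ∀ c : Fin σ, Lc c (nL c) = -2)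

include hLc0 hLcend in
lemma nL_pos (c : Fin σ) : 0 < nL c := by
  by_contra h
  have h0 : nL c = 0 := by omega
  have h1 := hLcend c
  rw [h0, hLc0 c] at h1
  exact absurd h1.symm wt_n2_lt_n1.ne

include hσ hmono hnL hLc0 hLcend in
lemma ic_lt_n (c : Fin σ) : ic c < n := by
  have hlastlt : ic ⟨σ-1, by omega⟩ < n := by
    have h1 : 0 < nL ⟨σ-1, by omega⟩ := nL_pos hLc0 hLcend _
    rw [hnL ⟨σ-1, by omega⟩] at h1
    rw [dif_neg (by simp; omega)] at h1
    omega
  rcases eq_or_lt_of_le (show c ≤ (⟨σ-1, by omega⟩ : Fin σ) from by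
      rw [Fin.le_def]; simp; omega) with heq | hlt
  · rw [heq]; exact hlastlt
  · exact lt_trans (hmono hlt) hlastlt

include hσ hLn hic0 hmono hzeros hnL hLc0 hLcend in
lemma L_interval_end (c : Fin σ) : ic c + nL c ≤ n ∧ L (ic c + nL c) ≤ 0 := by
  rw [hnL c]
  by_cases h : c.val + 1 < σ
  · rw [dif_pos h]
    have hlt : ic c < ic ⟨c.val+1, h⟩ := hmono (by rw [Fin.lt_def]; simp)
    have hicn : ic ⟨c.val+1, h⟩ < n := ic_lt_n hσ hmono hnL hLc0 hLcend _
    have heq : ic c + (ic ⟨c.val+1, h⟩ - ic c) = ic ⟨c.val+1, h⟩ := by omega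
    rw [heq]
    have hpos : 0 < ic ⟨c.val+1, h⟩ := by
      have := hmono (show (⟨0, hσ⟩ : Fin σ) < ⟨c.val+1, h⟩ from by rw [Fin.lt_def]; simp)
      omega
    refine ⟨le_of_lt hicn, ?_⟩
    exact le_of_eq ((hzeros _ hpos hicn).mpr ⟨_, rfl⟩)
  · rw [dif_neg h]
    have hicn : ic c < n := ic_lt_n hσ hmono hnL hLc0 hLcend c
    have heq : ic c + (n - ic c) = n := by omega
    rw [heq, hLn]
    exact ⟨le_refl _, le_trans wt_n2_le_n1 wt_n1_le_0⟩

include hσ hL0 hLn hLnn hic0 hmono hzeros hnL hLc0 hLcend in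
lemma countAll_le_nL {K : ℕ} (hK : K ≤ n) (t : Fin K → Fin σ)
    (hpair : ∀ e : Fin σ, PairConstraint L (ic e) t e) (c : Fin σ) :
    countAll t c ≤ nL c := by
  by_contra hcon
  push_neg at hcon
  have h1 : 0 < nL c := nL_pos hLc0 hLcend c
  set occ := Finset.univ.filter (fun m : Fin K => t m = c) with hocc
  have hcard : occ.card = countAll t c := rfl
  set e := occ.orderIsoOfFin hcard with he
  set i : Fin (countAll t c) := ⟨nL c - 1, by omega⟩ with hi
  set i' : Fin (countAll t c) := ⟨nL c, by omega⟩ with hi'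
  set h : Fin K := (e i : Fin K) with hh
  set h' : Fin K := (e i' : Fin K) with hh'
  have hmemocc : ∀ x : {x // x ∈ occ}, t x.1 = c := by
    rintro ⟨x, hx⟩
    have hx2 : x ∈ Finset.univ.filter (fun m : Fin K => t m = c) := hx
    exact (Finset.mem_filter.mp hx2).2
  have hmemi : t h = c := hmemocc (e i)
  have hmemi' : t h' = c := hmemocc (e i')
  have hlt : h < h' := by
    have : e i < e i' := e.lt_iff_lt.mpr (by simp only [hi, hi', Fin.mk_lt_mk]; omega)
    exact this
  have hbet : ∀ m : Fin K, h < m → m < h' → t m ≠ c := by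
    intro m hm1 hm2 hmc
    have hmem : m ∈ occ := Finset.mem_filter.mpr ⟨Finset.mem_univ _, hmc⟩
    set j := e.symm ⟨m, hmem⟩ with hj
    have hj1 : i < j := by
      rw [← e.lt_iff_lt, hj, OrderIso.apply_symm_apply]
      exact hm1
    have hj2 : j < i' := by
      rw [← e.lt_iff_lt, hj, OrderIso.apply_symm_apply]
      exact hm2
    have hj1v : i.val < j.val := hj1
    have hj2v : j.val < i'.val := hj2
    simp only [hi, hi'] at hj1v hj2v
    omega
  have hcb : countBelow t c h = nL c - 1 := by
    unfold countBelow
    have himg : Finset.univ.filter (fun m : Fin K => m < h ∧ t m = c)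
        = (Finset.Iio i).image (fun j : Fin (countAll t c) => (e j : Fin K)) := by
      ext m
      simp only [Finset.mem_filter, Finset.mem_univ, true_and, Finset.mem_image,
        Finset.mem_Iio]
      constructor
      · rintro ⟨hmh, hmc⟩
        have hmem : m ∈ occ := Finset.mem_filter.mpr ⟨Finset.mem_univ _, hmc⟩
        refine ⟨e.symm ⟨m, hmem⟩, ?_, by rw [OrderIso.apply_symm_apply]⟩
        rw [← e.lt_iff_lt, OrderIso.apply_symm_apply]
        exact hmh
      · rintro ⟨j, hji, rfl⟩
        constructor
        · have : e j < e i := e.lt_iff_lt.mpr hji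
          exact this
        · exact hmemocc (e j)
    rw [himg, Finset.card_image_of_injective _
      (show Function.Injective (fun j : Fin (countAll t c) => ((e j : Fin K))) from
        fun a b hab => e.injective (Subtype.coe_injective hab)), Fin.card_Iio]
  have hpc := hpair c h h' hlt hmemi hmemi' hbet
  rw [hcb, show ic c + (nL c - 1) + 1 = ic c + nL c from by omega] at hpc
  have hle0 : L (ic c + nL c) ≤ 0 :=
    (L_interval_end hσ hLn hic0 hmono hzeros hnL hLc0 hLcend c).2
  have hge1 : (1:WithTop ℤ) ≤ 1 + rangeMin L (h.val+1) h'.val :=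
    wt_one_add_ge _ (zero_le_rangeMin hLnn _ _ (Nat.succ_pos _)
      (lt_of_lt_of_le h'.isLt hK))
  rw [← hpc] at hge1
  exact absurd (le_trans hge1 hle0) (not_le.mpr wt_0_lt_1)

include hσ hic0 hmono hnL hLc0 hLcend in
lemma sum_nL : ∑ c : Fin σ, nL c = n := by
  classical
  have hgmono : Monotone (fun j : ℕ => if h : j < σ then ic ⟨j, h⟩ else n) := by
    intro a b hab
    dsimp only
    by_cases ha : a < σ <;> by_cases hb : b < σ
    · rw [dif_pos ha, dif_pos hb]
      exact hmono.monotone (Fin.mk_le_mk.mpr hab)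
    · rw [dif_pos ha, dif_neg hb]
      exact le_of_lt (ic_lt_n hσ hmono hnL hLc0 hLcend _)
    · exact absurd (lt_of_le_of_lt hab hb) ha
    · rw [dif_neg ha, dif_neg hb]
  have h1 : ∑ c : Fin σ, nL c = ∑ j ∈ Finset.range σ,
      ((if h : j+1 < σ then ic ⟨j+1, h⟩ else n) - (if h : j < σ then ic ⟨j, h⟩ else n)) := by
    rw [← Fin.sum_univ_eq_sum_range
      (fun j => (if h : j+1 < σ then ic ⟨j+1, h⟩ else n) - (if h : j < σ then ic ⟨j, h⟩ else n)) σ]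
    apply Finset.sum_congr rfl
    intro c _
    rw [hnL c]
    simp only [dif_pos c.isLt, Fin.eta]
  have h2 := Finset.sum_range_tsub hgmono σ
  simp only [dif_neg (lt_irrefl σ), dif_pos hσ, hic0, Nat.sub_zero] at h2
  rw [h1, h2]

include hσ hic0 hmono hnL hLc0 hLcend in
lemma counts_eq_of_length_eq {K : ℕ} (hK : K = n) (t : Fin K → Fin σ)
    (hle : ∀ e : Fin σ, countAll t e ≤ nL e) (d : Fin σ) : countAll t d = nL d := by
  by_contra hd
  have hlt : countAll t d < nL d := lt_of_le_of_ne (hle d) hd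
  have h1 : ∑ e : Fin σ, countAll t e = K := sum_countAll t
  have h2 : ∑ e : Fin σ, nL e = n := sum_nL hσ hic0 hmono hnL hLc0 hLcend
  have h3 : ∑ e : Fin σ, countAll t e < ∑ e : Fin σ, nL e :=
    Finset.sum_lt_sum (fun e _ => hle e) ⟨d, Finset.mem_univ d, hlt⟩
  omega

include hσ hL0 hLn hLnn hic0 hmono hzeros hnL hLc0 hLcmid hLcend in
lemma Lc_le_rangeMin {K : ℕ} (hK : K < n) (t : Fin K → Fin σ)
    (ht : PrefixConsistent L ic nL t) (d : Fin σ) :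
    Lc d (countAll t d) ≤ rangeMin L (lastOccSucc t d) K := by
  have hle := countAll_le_nL hσ hL0 hLn hLnn hic0 hmono hzeros hnL hLc0 hLcend
    (le_of_lt hK) t ht.1 d
  rcases Nat.lt_or_ge (countAll t d) (nL d) with hlt | hge
  · rcases Nat.eq_zero_or_pos (countAll t d) with h0 | hpos
    · rw [h0, hLc0, lastOccSucc_eq_zero t d h0, rangeMin_zero_eq hL0 hLnn K hK]
    · have hpp := ht.2 d hlt
      unfold PartialPairConstraint at hpp
      rw [hLcmid d _ hpos hlt, wt_sub_le_iff]
      exact hpp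
  · rw [le_antisymm hle hge, hLcend]
    exact neg_two_le_rangeMin hL0 hLn hLnn _ _ (le_of_lt hK)

include hσ hL0 hLn hLnn hic0 hmono hzeros hnL hLc0 hLcmid hLcend in
lemma partial_of_le {K : ℕ} (hK : K ≤ n) (t : Fin K → Fin σ) (d : Fin σ)
    (h : Lc d (countAll t d) ≤ rangeMin L (lastOccSucc t d) K)
    (hcnt : countAll t d < nL d) :
    PartialPairConstraint L (ic d) t d := by
  unfold PartialPairConstraint
  rcases Nat.eq_zero_or_pos (countAll t d) with h0 | hpos
  · rw [h0, lastOccSucc_eq_zero t d h0] at h ⊢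
    rw [hLc0] at h
    have hic_le : L (ic d + 0) ≤ 0 := by
      rw [Nat.add_zero]
      rcases Nat.eq_zero_or_pos (ic d) with hi0 | hipos
      · rw [hi0, hL0]; exact wt_n1_le_0
      · exact le_of_eq ((hzeros _ hipos (ic_lt_n hσ hmono hnL hLc0 hLcend d)).mpr ⟨d, rfl⟩)
    calc L (ic d + 0) ≤ 0 := hic_le
      _ = 1 + (-1) := wt_1_add_n1.symm
      _ ≤ 1 + rangeMin L 0 K := add_le_add_right h 1
  · rw [hLcmid d _ hpos hcnt, wt_sub_le_iff] at h
    exact h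

end Structural

section Update

variable {n σ : ℕ} {L : ℕ → WithTop ℤ} {ic : Fin σ → ℕ} {nL : Fin σ → ℕ}
  {Lc : Fin σ → ℕ → WithTop ℤ}
  (hσ : 0 < σ)
  (hL0 : L 0 = -1) (hLn : L n = -2)
  (hLnn : ∀ r : ℕ, 0 < r → r < n → 0 ≤ L r)
  (hic0 : ic ⟨0, hσ⟩ = 0) (hmono : StrictMono ic)
  (hzeros : ∀ r : ℕ, 0 < r → r < n → (L r = 0 ↔ ∃ c : Fin σ, ic c = r))
  (hnL : ∀ c : Fin σ,
    nL c = (if h : c.val + 1 < σ then ic ⟨c.val + 1, h⟩ else n) - ic c)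
  (hLc0 : ∀ c : Fin σ, Lc c 0 = -1)
  (hLcmid : ∀ (c : Fin σ) (m : ℕ), 0 < m → m < nL c → Lc c m = L (ic c + m) - 1)
  (hLcend : ∀ c : Fin σ, Lc c (nL c) = -2)

lemma bval_snoc_self {k : ℕ} (t : Fin k → Fin σ) (c : Fin σ) :
    bval L (Lc c) (Fin.snoc t c) c =
      if L (k + 1) < Lc c (countAll t c + 1) then -1
      else if Lc c (countAll t c + 1) = L (k + 1) then 0
      else 1 := by
  unfold bval
  rw [countAll_snoc_self, lastOccSucc_snoc_self, rangeMin_self]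

include hσ hL0 hLn hLnn hic0 hmono hzeros hnL hLc0 hLcmid hLcend in
lemma bval_snoc_other {k : ℕ} (hk : k < n) (t : Fin k → Fin σ)
    (ht : PrefixConsistent L ic nL t) (c d : Fin σ) (hdc : d ≠ c) :
    bval L (Lc d) (Fin.snoc t c) d =
      if L (k + 1) < Lc d (countAll t d) then -1
      else if Lc d (countAll t d) = L (k + 1) then 0
      else bval L (Lc d) t d := by
  have hAM := Lc_le_rangeMin hσ hL0 hLn hLnn hic0 hmono hzeros hnL hLc0 hLcmid hLcend
    hk t ht d
  have hM' : rangeMin L (lastOccSucc (Fin.snoc t c : Fin (k+1) → Fin σ) d) (k+1)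
      = rangeMin L (lastOccSucc t d) k ⊓ L (k+1) := by
    rw [lastOccSucc_snoc_ne t c d hdc, rangeMin_succ L _ k (by
      have := lastOccSucc_le t d; omega)]
  unfold bval
  rw [countAll_snoc_ne t c d hdc, hM']
  set A := Lc d (countAll t d) with hA
  set M := rangeMin L (lastOccSucc t d) k with hM
  by_cases h1 : L (k+1) < A
  · rw [if_pos (lt_of_le_of_lt inf_le_right h1), if_pos h1]
  · by_cases h2 : A = L (k+1)
    · have hMA : M ⊓ L (k+1) = A := by rw [← h2]; exact inf_eq_right.mpr hAM
      rw [if_neg (by rw [hMA]; exact lt_irrefl A), if_pos hMA.symm, if_neg h1, if_pos h2]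
    · have h3 : A < L (k+1) := lt_of_le_of_ne (not_lt.mp h1) h2
      rw [if_neg h1, if_neg h2]
      rcases eq_or_lt_of_le hAM with heq | hlt
    -- heq : A = M
      · have h3' : M ≤ L (k+1) := heq ▸ h3.le
        have hMA : M ⊓ L (k+1) = A := by rw [inf_eq_left.mpr h3', heq]
        rw [if_neg (by rw [hMA]; exact lt_irrefl A), if_pos hMA.symm,
          if_neg (by rw [← heq]; exact lt_irrefl A), if_pos heq]
      · have hA' : A < M ⊓ L (k+1) := lt_inf_iff.mpr ⟨hlt, h3⟩
        rw [if_neg (not_lt.mpr hA'.le), if_neg (ne_of_lt hA'),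
          if_neg (not_lt.mpr hAM), if_neg (ne_of_lt hlt)]

end Update

/-- **Extension lemma.** Let `s ∈ Σᵏ`, `k < n`, be prefix
consistent with `L`, and `c ∈ Σ`. Then `s·c` is prefix consistent iff
`b_c(s) = 0` and the updated vector `b(s·c)` contains no `-1`; the entries of
`b(s·c)` are given by the stated update rules (comparison with `L[k+1]`);
and `b(s·c)` and the Parikh vector `p(s·c)` depend only on `p(s)`, `b(s)`,
`c` and `L`. -/
theorem extension_lemma (n σ k : ℕ) (hσ : 0 < σ) (hk : k < n)
    (L : ℕ → WithTop ℤ)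
    (hL0 : L 0 = -1) (hLn : L n = -2)
    (hLnn : ∀ r : ℕ, 0 < r → r < n → 0 ≤ L r)
    (ic : Fin σ → ℕ) (hic0 : ic ⟨0, hσ⟩ = 0) (hmono : StrictMono ic)
    (hzeros : ∀ r : ℕ, 0 < r → r < n → (L r = 0 ↔ ∃ c : Fin σ, ic c = r))
    (nL : Fin σ → ℕ)
    (hnL : ∀ c : Fin σ,
      nL c = (if h : c.val + 1 < σ then ic ⟨c.val + 1, h⟩ else n) - ic c)
    (Lc : Fin σ → ℕ → WithTop ℤ)
    (hLc0 : ∀ c : Fin σ, Lc c 0 = -1)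
    (hLcmid : ∀ (c : Fin σ) (m : ℕ), 0 < m → m < nL c → Lc c m = L (ic c + m) - 1)
    (hLcend : ∀ c : Fin σ, Lc c (nL c) = -2)
    (s : Fin k → Fin σ) (hs : PrefixConsistent L ic nL s)
    (c : Fin σ) :
    -- (i)+(ii): consistency of the extension
    (PrefixConsistent L ic nL (Fin.snoc s c) ↔
      (bval L (Lc c) s c = 0 ∧
       ∀ d : Fin σ, bval L (Lc d) (Fin.snoc s c) d ≠ -1)) ∧
    -- the update rule for the extended character
    (bval L (Lc c) (Fin.snoc s c) c =
      if L (k + 1) < Lc c (countAll s c + 1) then -1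
      else if Lc c (countAll s c + 1) = L (k + 1) then 0
      else 1) ∧
    -- the update rule for the other characters
    (∀ d : Fin σ, d ≠ c →
      bval L (Lc d) (Fin.snoc s c) d =
        if L (k + 1) < Lc d (countAll s d) then -1
        else if Lc d (countAll s d) = L (k + 1) then 0
        else bval L (Lc d) s d) ∧
    -- `p(s·c)` and `b(s·c)` depend only on `p(s)`, `b(s)`, `c` and `L`
    (∀ s' : Fin k → Fin σ, PrefixConsistent L ic nL s' →
      (∀ d : Fin σ, countAll s' d = countAll s d) →
      (∀ d : Fin σ, bval L (Lc d) s' d = bval L (Lc d) s d) →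
      (∀ d : Fin σ, countAll (Fin.snoc s' c) d = countAll (Fin.snoc s c) d) ∧
      (∀ d : Fin σ, bval L (Lc d) (Fin.snoc s' c) d =
        bval L (Lc d) (Fin.snoc s c) d)) := by
  have hkn : k + 1 ≤ n := hk
  have hsle : ∀ e : Fin σ, countAll s e ≤ nL e := fun e =>
    countAll_le_nL hσ hL0 hLn hLnn hic0 hmono hzeros hnL hLc0 hLcend (le_of_lt hk) s hs.1 e
  refine ⟨?_, bval_snoc_self s c,
    fun d hdc => bval_snoc_other hσ hL0 hLn hLnn hic0 hmono hzeros hnL hLc0 hLcmid hLcend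
      hk s hs c d hdc, ?_⟩
  · constructor
    · intro hsc
      have hsnoc_le : ∀ e : Fin σ, countAll (Fin.snoc s c : Fin (k+1) → Fin σ) e ≤ nL e :=
        fun e => countAll_le_nL hσ hL0 hLn hLnn hic0 hmono hzeros hnL hLc0 hLcend
          hkn _ hsc.1 e
      constructor
      · rw [bval_eq_zero_iff]
        rcases Nat.eq_zero_or_pos (countAll s c) with h0 | hpos
        · rw [h0, hLc0, lastOccSucc_eq_zero s c h0, rangeMin_zero_eq hL0 hLnn k hk]
        · obtain ⟨h0, hc0, hmax⟩ := exists_lastOcc s c hpos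
          have hbet : ∀ m : Fin (k+1), Fin.castSucc h0 < m → m < Fin.last k →
              (Fin.snoc s c : Fin (k+1) → Fin σ) m ≠ c := by
            intro m hm1 hm2
            have hmk : m.val < k := by
              rw [Fin.lt_def] at hm2; simpa using hm2
            have hm' : m = Fin.castSucc ⟨m.val, hmk⟩ := by
              apply Fin.ext; simp
            rw [hm', Fin.snoc_castSucc]
            apply hmax
            rw [Fin.lt_def] at hm1 ⊢
            simpa using hm1
          have hpc := hsc.1 c (Fin.castSucc h0) (Fin.last k) (Fin.castSucc_lt_last h0)
            (by rw [Fin.snoc_castSucc]; exact hc0) (by rw [Fin.snoc_last]) hbet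
          rw [countBelow_snoc] at hpc
          simp only [Fin.coe_castSucc, Fin.val_last] at hpc
          have hcb := countAll_of_lastOcc s c h0 hc0 hmax
          have hlo := lastOccSucc_of_lastOcc s c h0 hc0 hmax
          have hcnt1 := hsnoc_le c
          rw [countAll_snoc_self] at hcnt1
          have hmlt : countAll s c < nL c := by omega
          rw [hLcmid c _ hpos hmlt, hlo, wt_sub_eq_iff]
          rw [show ic c + countBelow s c h0 + 1 = ic c + countAll s c from by omega] at hpc
          exact hpc
      · intro d
        rw [bval_ne_neg_one_iff]
        rcases eq_or_lt_of_le hkn with heq | hlt2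
        · have hfull := counts_eq_of_length_eq hσ hic0 hmono hnL hLc0 hLcend heq
            (Fin.snoc s c) hsnoc_le d
          rw [hfull, hLcend]
          exact neg_two_le_rangeMin hL0 hLn hLnn _ _ hkn
        · exact Lc_le_rangeMin hσ hL0 hLn hLnn hic0 hmono hzeros hnL hLc0 hLcmid hLcend
            hlt2 (Fin.snoc s c) hsc d
    · rintro ⟨hb0, hbne⟩
      constructor
      · intro d h h' hlt hd hd' hbet
        rcases Nat.lt_or_ge h'.val k with hk' | hk'
        · have hltv : h.val < h'.val := hlt
          have hhk : h.val < k := lt_trans hltv hk'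
          have hh : h = Fin.castSucc ⟨h.val, hhk⟩ := Fin.ext (by simp)
          have hh' : h' = Fin.castSucc ⟨h'.val, hk'⟩ := Fin.ext (by simp)
          have hpc := hs.1 d ⟨h.val, hhk⟩ ⟨h'.val, hk'⟩ (by rw [Fin.lt_def]; exact hltv)
            (by rw [hh, Fin.snoc_castSucc] at hd; exact hd)
            (by rw [hh', Fin.snoc_castSucc] at hd'; exact hd')
            (fun m0 hm1 hm2 => by
              have hb := hbet (Fin.castSucc m0)
                (by rw [hh]; exact Fin.castSucc_lt_castSucc_iff.mpr hm1)
                (by rw [hh']; exact Fin.castSucc_lt_castSucc_iff.mpr hm2)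
              rw [Fin.snoc_castSucc] at hb
              exact hb)
          rw [hh, countBelow_snoc]
          exact hpc
        · have hk'' : h'.val = k := by have := h'.isLt; omega
          have hlast : h' = Fin.last k := Fin.ext (by simp [hk''])
          have hcd : c = d := by rw [hlast, Fin.snoc_last] at hd'; exact hd'
          subst hcd
          have hltv : h.val < h'.val := hlt
          have hhk : h.val < k := by omega
          have hh : h = Fin.castSucc ⟨h.val, hhk⟩ := Fin.ext (by simp)
          have hc0 : s ⟨h.val, hhk⟩ = c := by rw [hh, Fin.snoc_castSucc] at hd; exact hd
          have hmax : ∀ m0 : Fin k, (⟨h.val, hhk⟩ : Fin k) < m0 → s m0 ≠ c := by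
            intro m0 hm0
            have hb := hbet (Fin.castSucc m0)
              (by rw [hh]; exact Fin.castSucc_lt_castSucc_iff.mpr hm0)
              (by rw [hlast]; exact Fin.castSucc_lt_last m0)
            rw [Fin.snoc_castSucc] at hb
            exact hb
          have hcb := countAll_of_lastOcc s c ⟨h.val, hhk⟩ hc0 hmax
          have hlo := lastOccSucc_of_lastOcc s c ⟨h.val, hhk⟩ hc0 hmax
          have hpos : 0 < countAll s c := by omega
          have hclt : countAll s c < nL c := by
            rcases eq_or_lt_of_le (hsle c) with he | hl
            · exfalso
              rw [bval_eq_zero_iff, he, hLcend] at hb0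
              have hge := neg_one_le_rangeMin hL0 hLnn (lastOccSucc s c) k hk
              rw [← hb0] at hge
              exact absurd hge (not_le.mpr wt_n2_lt_n1)
            · exact hl
          rw [bval_eq_zero_iff, hLcmid c _ hpos hclt, wt_sub_eq_iff, hlo] at hb0
          rw [hh, countBelow_snoc,
            show ic c + countBelow s c ⟨h.val, hhk⟩ + 1 = ic c + countAll s c from by omega,
            hk'']
          exact hb0
      · intro d hcntd
        exact partial_of_le hσ hL0 hLn hLnn hic0 hmono hzeros hnL hLc0 hLcmid hLcend hkn
          (Fin.snoc s c) d
          ((bval_ne_neg_one_iff L (Lc d) (Fin.snoc s c) d).mp (hbne d)) hcntd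
  · intro s' hs' hcnt hbv
    constructor
    · intro d
      by_cases hdc : d = c
      · subst hdc
        rw [countAll_snoc_self, countAll_snoc_self, hcnt]
      · rw [countAll_snoc_ne s' c d hdc, countAll_snoc_ne s c d hdc, hcnt d]
    · intro d
      by_cases hdc : d = c
      · subst hdc
        rw [bval_snoc_self, bval_snoc_self, hcnt]
      · rw [bval_snoc_other hσ hL0 hLn hLnn hic0 hmono hzeros hnL hLc0 hLcmid hLcend
            hk s' hs' c d hdc,
          bval_snoc_other hσ hL0 hLn hLnn hic0 hmono hzeros hnL hLc0 hLcmid hLcend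
            hk s hs c d hdc,
          hcnt d, hbv d]

end SILA
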